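/- arXiv:0910.0536 — 8 statements merged into one kernel-verified Lean document; each statement's English description precedes it below -/
import Mathlib

section
/- Let A = diag(a₁₁, …, aₙₙ) and A′ = diag(a′₁₁, …, a′ₙₙ) be diagonal matrices in Mₙ(𝒟), where 𝒟 = K[ζ] is the algebra of dual numbers over an algebraically closed field K of characteristic zero. If A and A′ are similar over 𝒟 (i.e. A′ = G A G⁻¹ for some invertible G ∈ Mₙ(𝒟)), then there exists a permutation σ of {1,…,n} such that a′ᵢᵢ = a_{σ(i)σ(i)} for every i; equivalently, the multiset of diagonal entries of A′ equals that of A. -/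
set_option synthInstance.maxHeartbeats 1000000
set_option maxHeartbeats 1000000

open Matrix TrivSqZeroExt Finset

/-- Matrices over the dual numbers are similar if conjugate by an invertible matrix. -/
def DSimilar {K : Type*} [Field K] {n : ℕ}
    (A B : Matrix (Fin n) (Fin n) (DualNumber K)) : Prop :=
  ∃ G : Matrix (Fin n) (Fin n) (DualNumber K), IsUnit G ∧ B = G * A * G⁻¹

section aux

variable {K : Type*} [Field K]

def dnEquiv (K : Type*) [Field K] : DualNumber K ≃ₗ[K] (K × K) := LinearEquiv.refl K (K × K)

instance : FiniteDimensional K (DualNumber K) := Module.Finite.equiv (dnEquiv K).symm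

theorem finrank_dn : Module.finrank K (DualNumber K) = 2 := by
  rw [(dnEquiv K).finrank_eq]; simp [Module.finrank_prod]

noncomputable def kker (x : DualNumber K) : ℕ :=
  Module.finrank K (LinearMap.ker (LinearMap.mulLeft K x))

open scoped Classical in
theorem kker_eq (x : DualNumber K) :
    kker x = (if x = 0 then 1 else 0) + (if fst x = 0 then 1 else 0) := by
  rcases eq_or_ne x 0 with rfl | hx
  · simp only [if_pos rfl, fst_zero, kker]
    rw [LinearMap.mulLeft_zero_eq_zero, LinearMap.ker_zero, finrank_top, finrank_dn]
    simp
  rcases eq_or_ne (fst x) 0 with hf | hf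
  · have hs : snd x ≠ 0 := by
      intro hs; exact hx (TrivSqZeroExt.ext (by simp [hf]) (by simp [hs]))
    have hker : LinearMap.ker (LinearMap.mulLeft K x)
        = LinearMap.range (TrivSqZeroExt.inrHom K K) := by
      ext v
      simp only [LinearMap.mem_ker, LinearMap.mem_range, LinearMap.mulLeft_apply]
      constructor
      · intro hv
        have h2 := congrArg snd hv
        rw [snd_mul, snd_zero, hf] at h2
        simp only [smul_eq_mul, zero_mul, op_smul_eq_smul, zero_add] at h2
        have : fst v = 0 := by
          by_contra hfv
          exact hs (by simpa [smul_eq_mul, hfv] using h2)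
        exact ⟨snd v, TrivSqZeroExt.ext (by simp [this]) (by simp)⟩
      · rintro ⟨m, rfl⟩
        exact TrivSqZeroExt.ext (by simp [hf]) (by simp [hf])
    rw [kker, hker, LinearMap.finrank_range_of_inj inr_injective]
    simp [hx, hf]
  · have hu : IsUnit x := isUnit_iff_isUnit_fst.2 (isUnit_iff_ne_zero.2 hf)
    have hker : LinearMap.ker (LinearMap.mulLeft K x) = ⊥ := by
      rw [LinearMap.ker_eq_bot']
      intro v hv
      simpa using hu.mul_left_cancel (by simpa using hv : x * v = x * 0)
    rw [kker, hker, finrank_bot]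
    simp [hx, hf]

noncomputable def kdim {n : ℕ} (M : Matrix (Fin n) (Fin n) (DualNumber K)) : ℕ :=
  Module.finrank K (LinearMap.ker ((Matrix.mulVecLin M).restrictScalars K))

def piSubEquiv {R ι : Type*} [CommRing R] {φ : ι → Type*} [∀ i, AddCommGroup (φ i)]
    [∀ i, Module R (φ i)] (p : ∀ i, Submodule R (φ i)) :
    (Submodule.pi Set.univ p) ≃ₗ[R] Π i, p i where
  toFun v i := ⟨v.1 i, v.2 i (Set.mem_univ i)⟩
  map_add' _ _ := rfl
  map_smul' _ _ := rfl
  invFun w := ⟨fun i => (w i).1, fun i _ => (w i).2⟩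
  left_inv _ := rfl
  right_inv _ := rfl

theorem kdim_diagonal {n : ℕ} (d : Fin n → DualNumber K) :
    kdim (Matrix.diagonal d) = ∑ i, kker (d i) := by
  have hker : LinearMap.ker ((Matrix.mulVecLin (Matrix.diagonal d)).restrictScalars K)
      = Submodule.pi Set.univ (fun i => LinearMap.ker (LinearMap.mulLeft K (d i))) := by
    ext v
    simp [Submodule.mem_pi, Matrix.mulVecLin_apply, Matrix.mulVec_diagonal, funext_iff]
  rw [kdim, hker, (piSubEquiv _).finrank_eq, Module.finrank_pi_fintype]
  rfl

theorem kdim_conj {n : ℕ} (A G : Matrix (Fin n) (Fin n) (DualNumber K)) (hG : IsUnit G) :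
    kdim (G * A * G⁻¹) = kdim A := by
  have hdet : IsUnit G.det := (Matrix.isUnit_iff_isUnit_det G).1 hG
  have h1 : G * G⁻¹ = 1 := Matrix.mul_nonsing_inv G hdet
  have h2 : G⁻¹ * G = 1 := Matrix.nonsing_inv_mul G hdet
  let e : (Fin n → DualNumber K) ≃ₗ[K] (Fin n → DualNumber K) :=
    LinearEquiv.ofLinear ((Matrix.mulVecLin G).restrictScalars K)
      ((Matrix.mulVecLin G⁻¹).restrictScalars K)
      (LinearMap.ext fun v => by
        show G.mulVec (G⁻¹.mulVec v) = v
        rw [Matrix.mulVec_mulVec, h1, Matrix.one_mulVec])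
      (LinearMap.ext fun v => by
        show G⁻¹.mulVec (G.mulVec v) = v
        rw [Matrix.mulVec_mulVec, h2, Matrix.one_mulVec])
  have hker : LinearMap.ker ((Matrix.mulVecLin (G * A * G⁻¹)).restrictScalars K)
      = Submodule.map (e : (Fin n → DualNumber K) →ₗ[K] (Fin n → DualNumber K))
          (LinearMap.ker ((Matrix.mulVecLin A).restrictScalars K)) := by
    ext v
    simp only [Submodule.mem_map, LinearMap.mem_ker, LinearMap.restrictScalars_apply,
      Matrix.mulVecLin_apply]
    constructor
    · intro hv
      refine ⟨G⁻¹.mulVec v, ?_, ?_⟩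
      · have h3 : G.mulVec (A.mulVec (G⁻¹.mulVec v)) = 0 := by
          rw [Matrix.mulVec_mulVec, Matrix.mulVec_mulVec]
          exact hv
        have h4 := congrArg (fun u => G⁻¹.mulVec u) h3
        simp only [Matrix.mulVec_mulVec, Matrix.mulVec_zero, ← Matrix.mul_assoc, h2,
          Matrix.one_mul] at h4
        rw [← Matrix.mulVec_mulVec] at h4
        exact h4
      · show G.mulVec (G⁻¹.mulVec v) = v
        rw [Matrix.mulVec_mulVec, h1, Matrix.one_mulVec]
    · rintro ⟨w, hw, rfl⟩
      show (G * A * G⁻¹).mulVec (G.mulVec w) = 0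
      rw [Matrix.mulVec_mulVec, Matrix.mul_assoc, Matrix.mul_assoc, h2, Matrix.mul_one,
        ← Matrix.mulVec_mulVec, hw, Matrix.mulVec_zero]
  rw [kdim, hker, LinearEquiv.finrank_map_eq, kdim]

open scoped Classical in
theorem sum_kker {n : ℕ} (b : Fin n → DualNumber K) (c : DualNumber K) :
    ∑ i, kker (b i - c)
      = (Finset.univ.filter fun i => b i = c).card
        + (Finset.univ.filter fun i => fst (b i) = fst c).card := by
  simp only [kker_eq]
  rw [Finset.sum_add_distrib, Finset.card_filter, Finset.card_filter]
  congr 1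
  · exact Finset.sum_congr rfl fun i _ => by simp [sub_eq_zero]
  · exact Finset.sum_congr rfl fun i _ => by simp [sub_eq_zero]

open scoped Classical in
theorem exists_perm {α : Type*} {n : ℕ} (a a' : Fin n → α)
    (hc : ∀ c, (Finset.univ.filter fun i => a' i = c).card
      = (Finset.univ.filter fun i => a i = c).card) :
    ∃ σ : Equiv.Perm (Fin n), ∀ i, a' i = a (σ i) := by
  classical
  have e : ∀ c : α, {i // a' i = c} ≃ {i // a i = c} := fun c =>
    Fintype.equivOfCardEq (by simpa [Fintype.card_subtype] using hc c)
  refine ⟨(Equiv.sigmaFiberEquiv a').symm.trans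
    ((Equiv.sigmaCongrRight e).trans (Equiv.sigmaFiberEquiv a)), fun i => ?_⟩
  exact ((e (a' i)) ⟨i, rfl⟩).2.symm

end aux

/-- If two diagonal matrices over the dual numbers are similar, then their diagonals
agree up to a permutation. -/
theorem stmt_0 {K : Type*} [Field K] [IsAlgClosed K] [CharZero K] {n : ℕ}
    (a a' : Fin n → DualNumber K)
    (h : DSimilar (Matrix.diagonal a) (Matrix.diagonal a')) :
    ∃ σ : Equiv.Perm (Fin n), ∀ i, a' i = a (σ i) := by
  classical
  obtain ⟨G, hG, hB⟩ := h
  have hdet : IsUnit G.det := (Matrix.isUnit_iff_isUnit_det G).1 hG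
  have h1 : G * G⁻¹ = 1 := Matrix.mul_nonsing_inv G hdet
  -- key identity for all c
  have key : ∀ c : DualNumber K,
      (Finset.univ.filter fun i => a' i = c).card
        + (Finset.univ.filter fun i => fst (a' i) = fst c).card
      = (Finset.univ.filter fun i => a i = c).card
        + (Finset.univ.filter fun i => fst (a i) = fst c).card := by
    intro c
    have hC : Matrix.diagonal (fun i => a' i - c)
        = G * Matrix.diagonal (fun i => a i - c) * G⁻¹ := by
      have hcomm : Commute (Matrix.scalar (Fin n) c) G :=
        Matrix.scalar_commute c (fun r' => Commute.all c r') G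
      have hd : ∀ b : Fin n → DualNumber K,
          Matrix.diagonal b - Matrix.scalar (Fin n) c
            = Matrix.diagonal (fun i => b i - c) := by
        intro b
        rw [Matrix.scalar_apply, Matrix.diagonal_sub]
      rw [← hd a', ← hd a, hB, mul_sub, sub_mul]
      congr 1
      rw [← hcomm.eq, Matrix.mul_assoc, h1, Matrix.mul_one]
    have := congrArg kdim hC
    rw [kdim_conj _ _ hG, kdim_diagonal, kdim_diagonal, sum_kker, sum_kker] at this
    exact this
  -- residue counts agree
  have res : ∀ l : K,
      (Finset.univ.filter fun i => fst (a' i) = l).card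
        = (Finset.univ.filter fun i => fst (a i) = l).card := by
    intro l
    obtain ⟨t, ht⟩ := Infinite.exists_notMem_finset
      ((Finset.univ.image fun i => snd (a i)) ∪ (Finset.univ.image fun i => snd (a' i)))
    set c : DualNumber K := TrivSqZeroExt.inl l + TrivSqZeroExt.inr t with hc
    have hfst : fst c = l := by simp [hc]
    have hsnd : snd c = t := by simp [hc]
    have hzero : ∀ b : Fin n → DualNumber K,
        (∀ i, snd (b i) ∈ (Finset.univ.image fun i => snd (b i))) →
        True := fun _ _ => trivial
    have hA : (Finset.univ.filter fun i => a i = c).card = 0 := by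
      rw [Finset.card_eq_zero, Finset.filter_eq_empty_iff]
      intro i _ hi
      exact ht (Finset.mem_union_left _ (Finset.mem_image.2 ⟨i, Finset.mem_univ i, by
        rw [hi, hsnd]⟩))
    have hA' : (Finset.univ.filter fun i => a' i = c).card = 0 := by
      rw [Finset.card_eq_zero, Finset.filter_eq_empty_iff]
      intro i _ hi
      exact ht (Finset.mem_union_right _ (Finset.mem_image.2 ⟨i, Finset.mem_univ i, by
        rw [hi, hsnd]⟩))
    have := key c
    rw [hA, hA', hfst, zero_add, zero_add] at this
    exact this
  -- entry counts agree
  have cnt : ∀ c : DualNumber K,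
      (Finset.univ.filter fun i => a' i = c).card
        = (Finset.univ.filter fun i => a i = c).card := by
    intro c
    have := key c
    rw [res (fst c)] at this
    exact Nat.add_right_cancel this
  exact exists_perm a a' cnt
end

section
/- Let s, t ≥ 1, let N ∈ M_t(K) be the nilpotent Jordan block (N_{a,b} = 1 if b = a + 1 and N_{a,b} = 0 otherwise), and let b : Fin s → Fin s → Fin t → K. Define the block matrix B, indexed by Fin s × Fin t, whose (i,j) block of size t × t is Σ_{l=0}^{t−1} b(i,j,l) · Nˡ (a 'regular' block, i.e. a polynomial in N). Then det B = (det B₀)ᵗ, where B₀ ∈ M_s(K) is the matrix of leading coefficients (B₀)ᵢⱼ = b(i,j,0). -/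
open Matrix

lemma jordan_pow_apply {K : Type*} [Field K] {t : ℕ}
    (N : Matrix (Fin t) (Fin t) K)
    (hN : ∀ a b : Fin t, N a b = if (b : ℕ) = (a : ℕ) + 1 then 1 else 0) :
    ∀ (l : ℕ) (a c : Fin t), (N ^ l) a c = if (c : ℕ) = (a : ℕ) + l then 1 else 0 := by
  intro l
  induction l with
  | zero =>
    intro a c
    simp [Matrix.one_apply, Fin.ext_iff, eq_comm]
  | succ l ih =>
    intro a c
    rw [pow_succ, Matrix.mul_apply]
    simp only [ih, hN, ite_mul, one_mul, zero_mul]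
    by_cases h : (c : ℕ) = (a : ℕ) + (l + 1)
    · have hal : (a : ℕ) + l < t := by omega
      rw [Finset.sum_eq_single (⟨(a : ℕ) + l, hal⟩ : Fin t)]
      · rw [if_pos (by simp), if_pos (by simp; omega), if_pos h]
      · intro b _ hb
        rw [if_neg]
        intro hb'
        exact hb (Fin.ext (by simpa using hb'))
      · simp
    · rw [if_neg h]
      apply Finset.sum_eq_zero
      intro b _
      split_ifs with h1 h2
      · omega
      · rfl
      · rfl

/-- Lemma 2.9: the determinant of a block matrix whose `t × t` blocks are all
polynomials in the nilpotent Jordan block `N` equals the `t`-th power of the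
determinant of the matrix of leading coefficients. -/
theorem stmt_6 {K : Type*} [Field K] {s t : ℕ} (hs : 1 ≤ s) (ht : 1 ≤ t)
    (bc : Fin s → Fin s → Fin t → K)
    (N : Matrix (Fin t) (Fin t) K)
    (hN : ∀ a b : Fin t, N a b = if (b : ℕ) = (a : ℕ) + 1 then 1 else 0)
    (B : Matrix (Fin s × Fin t) (Fin s × Fin t) K)
    (hB : ∀ (i j : Fin s) (a c : Fin t),
      B (i, a) (j, c) = (∑ l : Fin t, bc i j l • N ^ (l : ℕ)) a c)
    (B₀ : Matrix (Fin s) (Fin s) K)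
    (hB₀ : ∀ i j : Fin s, B₀ i j = bc i j ⟨0, ht⟩) :
    B.det = B₀.det ^ t := by
  have hentry : ∀ (i j : Fin s) (a c : Fin t),
      B (i, a) (j, c) = ∑ l : Fin t,
        bc i j l * (if (c : ℕ) = (a : ℕ) + (l : ℕ) then 1 else 0) := by
    intro i j a c
    rw [hB]
    rw [Matrix.sum_apply]
    refine Finset.sum_congr rfl fun l _ => ?_
    rw [Matrix.smul_apply, jordan_pow_apply N hN, smul_eq_mul]
  -- B is block triangular w.r.t. the second coordinate
  have htri : B.BlockTriangular Prod.snd := by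
    rintro ⟨i, a⟩ ⟨j, c⟩ h
    simp only [Prod.snd] at h
    rw [hentry]
    apply Finset.sum_eq_zero
    intro l _
    rw [if_neg (by rw [Fin.lt_def] at h; omega), mul_zero]
  rw [htri.det_fintype]
  have hblock : ∀ a : Fin t, (B.toSquareBlock Prod.snd a).det = B₀.det := by
    intro a
    let e : Fin s ≃ { p : Fin s × Fin t // p.2 = a } :=
      { toFun := fun i => ⟨(i, a), rfl⟩
        invFun := fun p => p.1.1
        left_inv := fun i => rfl
        right_inv := fun p => by
          obtain ⟨⟨j, c⟩, hc⟩ := p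
          cases hc
          rfl }
    have : B.toSquareBlock Prod.snd a = B₀.submatrix e.symm e.symm := by
      ext p q
      have hp := p.2
      have hq := q.2
      simp only [Matrix.toSquareBlock_def, Matrix.of_apply, Matrix.submatrix_apply]
      rw [show p.1 = (p.1.1, a) from Prod.ext rfl hp,
        show q.1 = (q.1.1, a) from Prod.ext rfl hq, hentry]
      show _ = B₀ (e.symm p) (e.symm q)
      rw [hB₀, Finset.sum_eq_single (⟨0, ht⟩ : Fin t)
        (fun l _ hl => by
          rw [if_neg (fun h' => hl (Fin.ext (by simp only [Fin.val_mk]; omega))),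
            mul_zero])
        (by simp)]
      rw [if_pos (by simp), mul_one]
      rfl
    rw [this, Matrix.det_submatrix_equiv_self]
  simp [hblock]
end

section
/- Let A, B ∈ M_m(K) be μ-similar for μ = (1,1,…,1); i.e. there exist an invertible lower triangular C ∈ GL_m(K) and an upper triangular D ∈ M_m(K) with Dᵢᵢ = Cᵢᵢ⁻¹ for all i, such that B = C A D. Then A and B have the same set of marked positions: 𝒫(A) = 𝒫(B). Moreover, if (r,s) ∈ 𝒫(A), then B_{rs} = C_{rr} C_{ss}⁻¹ A_{rs}. -/
open Matrix

/-- An entry of `A` at position `(r,s)` is *marked* if it is nonzero and all other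
entries `A i j` with `i ≤ r`, `j ≤ s` vanish. -/
def Marked {K : Type*} [Field K] {m : ℕ} (A : Matrix (Fin m) (Fin m) K)
    (r s : Fin m) : Prop :=
  A r s ≠ 0 ∧ ∀ i j : Fin m, i ≤ r → j ≤ s → (i, j) ≠ (r, s) → A i j = 0

/-- Key computation: if `A` vanishes on the rectangle `≤ (r,s)` except possibly at
`(r,s)` itself, then on that rectangle `(C*A*D) i j = C i r * A r s * D s j`. -/
lemma aux_formula {K : Type*} [Field K] {m : ℕ}
    (A C D : Matrix (Fin m) (Fin m) K)
    (hClow : ∀ i j : Fin m, i < j → C i j = 0)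
    (hDup : ∀ i j : Fin m, j < i → D i j = 0)
    (r s i j : Fin m) (hi : i ≤ r) (hj : j ≤ s)
    (hA : ∀ k l : Fin m, k ≤ r → l ≤ s → (k, l) ≠ (r, s) → A k l = 0) :
    (C * A * D) i j = C i r * A r s * D s j := by
  have hinner : (C * A) i s = C i r * A r s := by
    rw [mul_apply]
    apply Finset.sum_eq_single_of_mem r (Finset.mem_univ r)
    intro k _ hk
    rcases lt_or_ge i k with h | h
    · rw [hClow i k h, zero_mul]
    · rw [hA k s (h.trans hi) le_rfl (by simp [hk]), mul_zero]
  have houter : ∀ x ∈ Finset.univ, x ≠ s → (C * A) i x * D x j = 0 := by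
    intro x _ hx
    rcases lt_or_ge j x with h | h
    · rw [hDup x j h, mul_zero]
    · have : (C * A) i x = 0 := by
        rw [mul_apply]
        apply Finset.sum_eq_zero
        intro k _
        rcases lt_or_ge i k with h' | h'
        · rw [hClow i k h', zero_mul]
        · rw [hA k x (h'.trans hi) (h.trans hj) (by simp [hx]), mul_zero]
      rw [this, zero_mul]
  rw [Matrix.mul_apply (M := C * A) (N := D),
    Finset.sum_eq_single_of_mem s (Finset.mem_univ s) houter, hinner]

/-- If `C*A*D` vanishes on the rectangle `≤ (r,s)`, so does `A`. -/
lemma aux_vanish {K : Type*} [Field K] {m : ℕ}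
    (A C D : Matrix (Fin m) (Fin m) K)
    (hClow : ∀ i j : Fin m, i < j → C i j = 0)
    (hDup : ∀ i j : Fin m, j < i → D i j = 0)
    (hCd : ∀ i : Fin m, C i i ≠ 0) (hDd : ∀ i : Fin m, D i i ≠ 0)
    (r s : Fin m)
    (hB : ∀ k l : Fin m, k ≤ r → l ≤ s → (C * A * D) k l = 0) :
    ∀ k l : Fin m, k ≤ r → l ≤ s → A k l = 0 := by
  have H : ∀ n : ℕ, ∀ k l : Fin m, k.1 + l.1 = n → k ≤ r → l ≤ s → A k l = 0 := by
    intro n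
    induction n using Nat.strong_induction_on with
    | _ n ih =>
      intro k l hn hk hl
      have hrect : ∀ p q : Fin m, p ≤ k → q ≤ l → (p, q) ≠ (k, l) → A p q = 0 := by
        intro p q hp hq hne
        refine ih (p.1 + q.1) ?_ p q rfl (hp.trans hk) (hq.trans hl)
        have h1 : p.1 ≤ k.1 := hp
        have h2 : q.1 ≤ l.1 := hq
        have h3 : p.1 ≠ k.1 ∨ q.1 ≠ l.1 := by
          by_contra h
          push_neg at h
          exact hne (by rw [Fin.ext_iff.mpr h.1, Fin.ext_iff.mpr h.2])
        omega
      have hf := aux_formula A C D hClow hDup k l k l le_rfl le_rfl hrect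
      have h0 := hB k l hk hl
      rw [hf] at h0
      rcases mul_eq_zero.mp h0 with h | h
      · rcases mul_eq_zero.mp h with h | h
        · exact absurd h (hCd k)
        · exact h
      · exact absurd h (hDd l)
  intro k l hk hl
  exact H (k.1 + l.1) k l rfl hk hl

/-- Lemma 3.3: μ-similar matrices (μ = (1,…,1)) have the same marked positions,
and the marked entries transform by `B rs = C rr · C ss⁻¹ · A rs`. -/
theorem stmt_7 {K : Type*} [Field K] {m : ℕ}
    (A B C D : Matrix (Fin m) (Fin m) K)
    (hC : IsUnit C) (hClow : ∀ i j : Fin m, i < j → C i j = 0)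
    (hDup : ∀ i j : Fin m, j < i → D i j = 0)
    (hdiag : ∀ i : Fin m, D i i = (C i i)⁻¹)
    (hB : B = C * A * D) :
    (∀ r s : Fin m, Marked A r s ↔ Marked B r s) ∧
    (∀ r s : Fin m, Marked A r s → B r s = C r r * (C s s)⁻¹ * A r s) := by
  -- diagonal entries of C are nonzero
  have hdet : C.det ≠ 0 := by
    intro h
    rw [isUnit_iff_isUnit_det, h, isUnit_zero_iff] at hC
    exact one_ne_zero hC.symm
  have hCd : ∀ i : Fin m, C i i ≠ 0 := by
    intro i hi
    apply hdet
    rw [Matrix.det_of_lowerTriangular C hClow]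
    exact Finset.prod_eq_zero (Finset.mem_univ i) hi
  have hDd : ∀ i : Fin m, D i i ≠ 0 := by
    intro i
    rw [hdiag i]
    exact inv_ne_zero (hCd i)
  have fwd : ∀ r s : Fin m, Marked A r s → Marked B r s := by
    intro r s ⟨hne, hrect⟩
    constructor
    · rw [hB, aux_formula A C D hClow hDup r s r s le_rfl le_rfl hrect]
      exact mul_ne_zero (mul_ne_zero (hCd r) hne) (hDd s)
    · intro i j hi hj hij
      rw [hB, aux_formula A C D hClow hDup r s i j hi hj hrect]
      rcases lt_or_eq_of_le hi with h | h
      · rw [hClow i r h, zero_mul, zero_mul]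
      · have hjs : j < s := by
          rcases lt_or_eq_of_le hj with h' | h'
          · exact h'
          · exact absurd (by rw [h, h']) hij
        rw [hDup s j hjs, mul_zero]
  have bwd : ∀ r s : Fin m, Marked B r s → Marked A r s := by
    intro r s ⟨hne, hrect⟩
    have hArect : ∀ i j : Fin m, i ≤ r → j ≤ s → (i, j) ≠ (r, s) → A i j = 0 := by
      intro i j hi hj hij
      refine aux_vanish A C D hClow hDup hCd hDd i j ?_ i j le_rfl le_rfl
      intro k l hk hl
      rw [← hB]
      refine hrect k l (hk.trans hi) (hl.trans hj) ?_
      intro h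
      apply hij
      have h1 : k = r := (Prod.mk.injEq _ _ _ _).mp h |>.1
      have h2 : l = s := (Prod.mk.injEq _ _ _ _).mp h |>.2
      have : r ≤ i := h1 ▸ hk
      have : s ≤ j := h2 ▸ hl
      rw [Prod.mk.injEq]
      constructor
      · exact le_antisymm hi (h1 ▸ hk)
      · exact le_antisymm hj (h2 ▸ hl)
    refine ⟨?_, hArect⟩
    intro hA0
    apply hne
    rw [hB, aux_formula A C D hClow hDup r s r s le_rfl le_rfl hArect, hA0,
      mul_zero, zero_mul]
  refine ⟨fun r s => ⟨fwd r s, bwd r s⟩, ?_⟩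
  intro r s ⟨hne, hrect⟩
  rw [hB, aux_formula A C D hClow hDup r s r s le_rfl le_rfl hrect, hdiag s]
  ring
end

section
/- Let A ∈ M_m(K) and let (r,s) be the position of a marked entry of A. Then there exist an invertible lower triangular matrix C ∈ GL_m(K) and an upper triangular matrix D ∈ M_m(K) with Dᵢᵢ = Cᵢᵢ⁻¹ for all i, such that the matrix B = C A D satisfies B_{rj} = 0 for all j ≠ s and B_{is} = 0 for all i ≠ r (while B_{rs} = C_{rr}C_{ss}⁻¹A_{rs} ≠ 0). -/
/-!
Subtracting multiples of row `r` from the other rows clears column `s` outside row `r` and leaves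
row `r` alone; subtracting multiples of column `s` from the other columns then clears row `r`
outside column `s` and leaves column `s` alone. Markedness says that column `s` vanishes above
row `r` and row `r` vanishes left of column `s`, so only rows below `r` and columns right of `s`
change: the row operations form a lower and the column operations an upper unitriangular matrix.
-/

open Matrix

namespace Matrix

variable {n K : Type*} [DecidableEq n] [Field K]

def colClearingVec (v : n → K) (p : n) : n → K :=
  Pi.single p 1 - (v p)⁻¹ • v

/-- Left multiplication by `colClearing v p` adds `colClearingVec v p i` times row `p` to row `i`;
applied to a matrix whose column is `v`, it clears that column outside row `p`. -/
def colClearing (v : n → K) (p : n) : Matrix n n K :=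
  1 + vecMulVec (colClearingVec v p) (Pi.single p 1)

variable {v : n → K} {p : n}

theorem colClearingVec_self (hv : v p ≠ 0) : colClearingVec v p p = 0 := by
  simp [colClearingVec, hv]

theorem add_colClearingVec_mul (hv : v p ≠ 0) (i : n) :
    v i + colClearingVec v p i * v p = (Pi.single p (v p) : n → K) i := by
  rcases eq_or_ne i p with rfl | hi
  · simp [colClearingVec, hv]
  · rw [colClearingVec, Pi.sub_apply, Pi.smul_apply, smul_eq_mul, Pi.single_eq_of_ne hi,
      Pi.single_eq_of_ne hi]
    field_simp
    ring

theorem colClearing_apply_self (hv : v p ≠ 0) (i : n) : colClearing v p i i = 1 := by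
  rcases eq_or_ne i p with rfl | hi
  · simp [colClearing, vecMulVec_apply, colClearingVec_self hv]
  · simp [colClearing, vecMulVec_apply, hi]

theorem isLowerTriangular_colClearing [LinearOrder n] (hv : ∀ i < p, v i = 0) :
    (colClearing v p).IsLowerTriangular := by
  intro i j (hij : i < j)
  rcases eq_or_ne j p with rfl | hj
  · simp [colClearing, vecMulVec_apply, colClearingVec, hij.ne, hv i hij]
  · simp [colClearing, vecMulVec_apply, hij.ne, hj]

variable [Fintype n]

theorem colClearing_mul (v : n → K) (p : n) (M : Matrix n n K) :
    colClearing v p * M = M + vecMulVec (colClearingVec v p) (M p) := by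
  rw [colClearing, Matrix.add_mul, Matrix.one_mul, vecMulVec_mul, single_one_vecMul, row_def]

theorem mul_colClearing_transpose (v : n → K) (p : n) (M : Matrix n n K) :
    M * (colClearing v p)ᵀ = M + vecMulVec (fun i => M i p) (colClearingVec v p) := by
  rw [← transpose_transpose M, ← transpose_mul, colClearing_mul, transpose_add,
    transpose_vecMulVec]
  rfl

theorem colClearing_mul_apply_row (hv : v p ≠ 0) (M : Matrix n n K) (j : n) :
    (colClearing v p * M) p j = M p j := by
  simp [colClearing_mul, vecMulVec_apply, colClearingVec_self hv]

theorem colClearing_col_mul_apply (M : Matrix n n K) {q : n} (hM : M p q ≠ 0) (i : n) :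
    (colClearing (fun i => M i q) p * M) i q = (Pi.single p (M p q) : n → K) i := by
  simpa [colClearing_mul, vecMulVec_apply] using add_colClearingVec_mul (v := fun i => M i q) hM i

theorem mul_colClearing_transpose_apply_col (hv : v p ≠ 0) (M : Matrix n n K) (i : n) :
    (M * (colClearing v p)ᵀ) i p = M i p := by
  simp [mul_colClearing_transpose, vecMulVec_apply, colClearingVec_self hv]

theorem mul_colClearing_row_transpose_apply (M : Matrix n n K) {q : n} (hM : M q p ≠ 0) (j : n) :
    (M * (colClearing (M q) p)ᵀ) q j = (Pi.single p (M q p) : n → K) j := by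
  simpa [mul_colClearing_transpose, vecMulVec_apply, mul_comm] using
    add_colClearingVec_mul (v := M q) hM j

theorem det_colClearing [LinearOrder n] (hv : v p ≠ 0) (hv' : ∀ i < p, v i = 0) :
    (colClearing v p).det = 1 := by
  rw [det_of_isLowerTriangular _ (isLowerTriangular_colClearing hv')]
  exact Finset.prod_eq_one fun i _ => colClearing_apply_self hv i

end Matrix

/-- Lemma 3.4: a marked entry can be used to clear its row and column by a
μ-similarity transformation (μ = (1,…,1)). -/
theorem stmt_8 {K : Type*} [Field K] {m : ℕ}
    (A : Matrix (Fin m) (Fin m) K) (r s : Fin m) (hrs : Marked A r s) :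
    ∃ C D : Matrix (Fin m) (Fin m) K,
      IsUnit C ∧ (∀ i j : Fin m, i < j → C i j = 0) ∧
      (∀ i j : Fin m, j < i → D i j = 0) ∧
      (∀ i : Fin m, D i i = (C i i)⁻¹) ∧
      (∀ j : Fin m, j ≠ s → (C * A * D) r j = 0) ∧
      (∀ i : Fin m, i ≠ r → (C * A * D) i s = 0) ∧
      (C * A * D) r s = C r r * (C s s)⁻¹ * A r s ∧
      (C * A * D) r s ≠ 0 := by
  obtain ⟨hA, hzero⟩ := hrs
  have hcol : ∀ i < r, A i s = 0 := fun i hi => hzero i s hi.le le_rfl (by simp [hi.ne])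
  have hrow : ∀ j < s, A r j = 0 := fun j hj => hzero r j le_rfl hj.le (by simp [hj.ne])
  set C := colClearing (fun i => A i s) r
  set D := (colClearing (A r) s)ᵀ
  have hCA_row : (C * A) r = A r := funext (colClearing_mul_apply_row (p := r) hA A)
  have hB_row : ∀ j, (C * A * D) r j = (Pi.single s (A r s) : Fin m → K) j := by
    intro j
    simpa [D, ← hCA_row, colClearing_mul_apply_row hA] using
      mul_colClearing_row_transpose_apply (C * A) (p := s) (q := r) (by rwa [hCA_row]) j
  have hB_col : ∀ i, (C * A * D) i s = (Pi.single r (A r s) : Fin m → K) i := fun i => by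
    rw [mul_colClearing_transpose_apply_col hA, colClearing_col_mul_apply A hA]
  have hCdiag : ∀ i, C i i = 1 := colClearing_apply_self hA
  refine ⟨C, D, ?_, fun i j h => isLowerTriangular_colClearing hcol h,
    fun i j h => isLowerTriangular_colClearing hrow h, fun i => ?_, fun j hj => ?_, fun i hi => ?_,
    ?_, ?_⟩
  · rw [isUnit_iff_isUnit_det, det_colClearing (p := r) hA hcol]
    exact isUnit_one
  · simp [D, hCdiag, colClearing_apply_self hA]
  · simp [hB_row, hj]
  · simp [hB_col, hi]
  · simp [hB_row, hCdiag]
  · simpa [hB_row] using hA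
end

section
/- For r, s ∈ {1,…,m} and A ∈ M_m(K), define f_{r,s}(A) ∈ M_m(K) by: (f_{r,s}(A))_{rs} = 1; (f_{r,s}(A))_{rl} = 0 for l ≠ s and (f_{r,s}(A))_{ks} = 0 for k ≠ r; and for k ≠ r, l ≠ s, (f_{r,s}(A))_{kl} = sgn(k−r)·sgn(l−s)·(A_{rs}A_{kl} − A_{rl}A_{ks}) (this is the determinant of the 2×2 submatrix of A on rows {r,k} and columns {s,l} taken in increasing order). Suppose C ∈ M_m(K) is lower triangular with all off-diagonal entries of its r-th row equal to zero, and D ∈ M_m(K) is upper triangular with all off-diagonal entries of its s-th column equal to zero. Then f_{r,s}(C A D) = f_{r,r}(C) · f_{r,s}(A) · f_{s,s}(D). -/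
open Matrix

def fRS {K : Type*} [Field K] {m : ℕ} (r s : Fin m)
    (A : Matrix (Fin m) (Fin m) K) : Matrix (Fin m) (Fin m) K :=
  fun k l =>
    if k = r then (if l = s then 1 else 0)
    else if l = s then 0
    else ((if r < k then (1 : K) else -1) * (if s < l then (1 : K) else -1)) *
      (A r s * A k l - A r l * A k s)

/-- Proposition 3.1: `f_{r,s}(CAD) = f_{r,r}(C) f_{r,s}(A) f_{s,s}(D)` when `C` is
lower triangular with zero off-diagonal entries in its `r`-th row and `D` is
upper triangular with zero off-diagonal entries in its `s`-th column. -/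
theorem stmt_10 {K : Type*} [Field K] {m : ℕ} (r s : Fin m)
    (A C D : Matrix (Fin m) (Fin m) K)
    (hClow : ∀ i j : Fin m, i < j → C i j = 0)
    (hCrow : ∀ k : Fin m, k ≠ r → C r k = 0)
    (hDup : ∀ i j : Fin m, j < i → D i j = 0)
    (hDcol : ∀ l : Fin m, l ≠ s → D l s = 0) :
    fRS r s (C * A * D) = fRS r r C * fRS r s A * fRS s s D := by
  have hCA : ∀ j, (C * A) r j = C r r * A r j := by
    intro j
    rw [mul_apply]
    exact Finset.sum_eq_single r (fun i _ hi => by rw [hCrow i hi, zero_mul])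
      (fun h => absurd (Finset.mem_univ r) h)
  have hfCr : ∀ i : Fin m, fRS r r C r i = if i = r then 1 else 0 := by
    intro i; by_cases hi : i = r <;> simp [fRS, hi]
  have hfAr : ∀ j : Fin m, fRS r s A r j = if j = s then 1 else 0 := by
    intro j; by_cases hj : j = s <;> simp [fRS, hj]
  have hfDs : ∀ l : Fin m, fRS s s D s l = if l = s then 1 else 0 := by
    intro l; by_cases hl : l = s <;> simp [fRS, hl]
  have hfDjs : ∀ j : Fin m, fRS s s D j s = if j = s then 1 else 0 := by
    intro j; by_cases hj : j = s <;> simp [fRS, hj]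
  have hfCkr : ∀ k : Fin m, k ≠ r → fRS r r C k r = 0 := by
    intro k hk; simp [fRS, hk]
  have hfAis : ∀ i : Fin m, fRS r s A i s = if i = r then 1 else 0 := by
    intro i; by_cases hi : i = r <;> simp [fRS, hi]
  funext k l
  by_cases hk : k = r
  · rw [hk, mul_apply]
    have h2 : ∀ j, (fRS r r C * fRS r s A) r j = if j = s then 1 else 0 := by
      intro j
      rw [mul_apply]
      rw [Finset.sum_eq_single r (fun i _ hi => by rw [hfCr, if_neg hi, zero_mul])
        (fun h => absurd (Finset.mem_univ r) h), hfCr, if_pos rfl, one_mul, hfAr]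
    simp only [h2]
    rw [Finset.sum_eq_single s (fun j _ hj => by rw [if_neg hj, zero_mul])
      (fun h => absurd (Finset.mem_univ s) h), if_pos rfl, one_mul, hfDs]
    by_cases hl : l = s <;> simp [fRS, hl]
  · by_cases hl : l = s
    · rw [hl, mul_apply]
      have h3 : (fRS r r C * fRS r s A) k s = 0 := by
        rw [mul_apply]
        refine Finset.sum_eq_zero fun i _ => ?_
        rw [hfAis]
        by_cases hi : i = r
        · rw [hi, hfCkr k hk, zero_mul]
        · rw [if_neg hi, mul_zero]
      rw [Finset.sum_eq_single s (fun j _ hj => by rw [hfDjs, if_neg hj, mul_zero])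
        (fun h => absurd (Finset.mem_univ s) h), h3, zero_mul]
      simp [fRS, hk]
    · -- main case
      have hBrs : (C * A * D) r s = C r r * A r s * D s s := by
        rw [mul_apply]
        rw [Finset.sum_eq_single s (fun j _ hj => by rw [hDcol j hj, mul_zero])
          (fun h => absurd (Finset.mem_univ s) h), hCA]
      have hBrl : (C * A * D) r l = ∑ j, C r r * A r j * D j l := by
        rw [mul_apply]
        exact Finset.sum_congr rfl fun j _ => by rw [hCA]
      have hBks : (C * A * D) k s = (∑ i, C k i * A i s) * D s s := by
        rw [mul_apply]
        rw [Finset.sum_eq_single s (fun j _ hj => by rw [hDcol j hj, mul_zero])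
          (fun h => absurd (Finset.mem_univ s) h), mul_apply]
      have hBkl : (C * A * D) k l = ∑ j, (∑ i, C k i * A i j) * D j l := by
        rw [mul_apply]
        exact Finset.sum_congr rfl fun j _ => by rw [mul_apply]
      have lhs_eq : fRS r s (C * A * D) k l = ∑ j, ∑ i,
          (((if r < k then (1:K) else -1) * (if s < l then (1:K) else -1)) *
            (C r r * D s s)) * (C k i * D j l * (A r s * A i j - A r j * A i s)) := by
        show (if k = r then (if l = s then (1:K) else 0)
          else if l = s then 0
          else ((if r < k then (1 : K) else -1) * (if s < l then (1 : K) else -1)) *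
            ((C*A*D) r s * (C*A*D) k l - (C*A*D) r l * (C*A*D) k s)) = _
        rw [if_neg hk, if_neg hl, hBrs, hBrl, hBks, hBkl]
        have eX : C r r * A r s * D s s * (∑ j, (∑ i, C k i * A i j) * D j l)
            = ∑ j, ∑ i, C r r * A r s * D s s * (C k i * A i j * D j l) := by
          simp only [Finset.mul_sum, Finset.sum_mul]
        have eY : (∑ j, C r r * A r j * D j l) * ((∑ i, C k i * A i s) * D s s)
            = ∑ j, ∑ i, (C r r * A r j * D j l) * (C k i * A i s * D s s) := by
          rw [show (∑ i, C k i * A i s) * D s s = ∑ i, C k i * A i s * D s s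
            by rw [Finset.sum_mul], Finset.sum_mul_sum]
        rw [eX, eY, mul_sub]
        simp only [Finset.mul_sum]
        rw [← Finset.sum_sub_distrib]
        refine Finset.sum_congr rfl fun j _ => ?_
        rw [← Finset.sum_sub_distrib]
        exact Finset.sum_congr rfl fun i _ => by ring
      have rhs_eq : (fRS r r C * fRS r s A * fRS s s D) k l = ∑ j, ∑ i,
          (((if r < k then (1:K) else -1) * (if s < l then (1:K) else -1)) *
            (C r r * D s s)) * (C k i * D j l * (A r s * A i j - A r j * A i s)) := by
        rw [mul_apply]
        refine Finset.sum_congr rfl fun j _ => ?_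
        rw [mul_apply, Finset.sum_mul]
        refine Finset.sum_congr rfl fun i _ => ?_
        by_cases hi : i = r
        · have h0 : fRS r r C k r = 0 := hfCkr k hk
          rw [hi, h0, zero_mul, zero_mul]
          ring
        · by_cases hj : j = s
          · have h0 : fRS s s D s l = 0 := by rw [hfDs, if_neg hl]
            rw [hj, h0, mul_zero]
            ring
          · simp only [fRS, if_neg hk, if_neg hl, if_neg hi, if_neg hj,
              hCrow i hi, hDcol j hj]
            split_ifs <;> ring
      rw [lhs_eq, rhs_eq]
end

section
/- For every A ∈ M_m(K) there exists a matrix B ∈ 𝒰_m that is unitary μ-similar to A (μ = (1,…,1)): there exist a lower triangular matrix C ∈ M_m(K) and an upper triangular matrix D ∈ M_m(K), both with all diagonal entries equal to 1, such that C A D ∈ 𝒰_m. -/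
/-!
Gaussian elimination restricted to unitriangular operations. Process the columns from left to
right, keeping every nonzero entry of a processed column alone in its row and column. In the next
column `t`, take the topmost nonzero entry `(p, t)`. Row `p` vanishes on the processed columns
(otherwise its entry there would be isolated), so adding multiples of row `p` to the rows below
it (a lower unitriangular operation) clears column `t` below `p`, and adding multiples of
column `t` to the columns to its right (an upper unitriangular operation) then clears row `p`,
without disturbing the processed columns.
-/

open Matrix

/-- `𝒰_m`: each row and each column contains at most one nonzero entry. -/
def InU {K : Type*} [Field K] {m : ℕ} (B : Matrix (Fin m) (Fin m) K) : Prop :=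
  (∀ i j k : Fin m, B i j ≠ 0 → B i k ≠ 0 → j = k) ∧
  (∀ i j k : Fin m, B i j ≠ 0 → B k j ≠ 0 → i = k)

open OrderDual

namespace Matrix

variable {α m n R K : Type*}

theorem BlockTriangular.mul_apply_self [Fintype m] [LinearOrder α]
    [NonUnitalNonAssocSemiring R] {b : m → α} (hb : b.Injective) {M N : Matrix m m R}
    (hM : M.BlockTriangular b) (hN : N.BlockTriangular b) (i : m) :
    (M * N) i i = M i i * N i i := by
  rw [mul_apply]
  refine Finset.sum_eq_single i (fun k _ hk => ?_) (by simp)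
  rcases lt_or_gt_of_ne (hb.ne hk) with h | h
  · rw [hM h, zero_mul]
  · rw [hN h, mul_zero]

def IsLowerUnitriangular [LT m] [Zero R] [One R] (M : Matrix m m R) : Prop :=
  M.IsLowerTriangular ∧ ∀ i, M i i = 1

def IsUpperUnitriangular [LT m] [Zero R] [One R] (M : Matrix m m R) : Prop :=
  M.IsUpperTriangular ∧ ∀ i, M i i = 1

section Unitriangular

variable [LinearOrder m] [Semiring R]

theorem isLowerUnitriangular_one : (1 : Matrix m m R).IsLowerUnitriangular :=
  ⟨blockTriangular_one, one_apply_eq⟩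

theorem isUpperUnitriangular_one : (1 : Matrix m m R).IsUpperUnitriangular :=
  ⟨blockTriangular_one, one_apply_eq⟩

theorem IsLowerUnitriangular.mul [Fintype m] {M N : Matrix m m R}
    (hM : M.IsLowerUnitriangular) (hN : N.IsLowerUnitriangular) :
    (M * N).IsLowerUnitriangular :=
  ⟨hM.1.mul hN.1, fun i => by
    rw [hM.1.mul_apply_self toDual.injective hN.1, hM.2, hN.2, one_mul]⟩

theorem IsUpperUnitriangular.mul [Fintype m] {M N : Matrix m m R}
    (hM : M.IsUpperUnitriangular) (hN : N.IsUpperUnitriangular) :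
    (M * N).IsUpperUnitriangular :=
  ⟨hM.1.mul hN.1, fun i => by
    rw [hM.1.mul_apply_self Function.injective_id hN.1, hM.2, hN.2, one_mul]⟩

theorem IsLowerUnitriangular.transpose {M : Matrix m m R} (hM : M.IsLowerUnitriangular) :
    Mᵀ.IsUpperUnitriangular :=
  ⟨fun _ _ h => hM.1 h, hM.2⟩

end Unitriangular

theorem isLowerUnitriangular_one_sub_vecMulVec_single [LinearOrder m] [Ring R] {c : m → R} {p : m}
    (hc : ∀ i ≤ p, c i = 0) : (1 - vecMulVec c (Pi.single p 1)).IsLowerUnitriangular := by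
  refine ⟨fun i k (hik : i < k) => ?_, fun i => ?_⟩
  · rcases eq_or_ne k p with rfl | hk
    · simp [one_apply_ne hik.ne, vecMulVec_apply, hc i hik.le]
    · simp [one_apply_ne hik.ne, vecMulVec_apply, hk]
  · rcases eq_or_ne i p with rfl | hi
    · simp [vecMulVec_apply, hc i le_rfl]
    · simp [vecMulVec_apply, hi]

theorem one_sub_vecMulVec_single_mul [Fintype m] [DecidableEq m] [Ring R] (c : m → R) (p : m)
    (M : Matrix m n R) : (1 - vecMulVec c (Pi.single p 1)) * M = M - vecMulVec c (M p) := by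
  rw [Matrix.sub_mul, Matrix.one_mul, vecMulVec_mul, single_one_vecMul]
  rfl

/-- For `μ = (1, …, 1)` this is the paper's unitary `μ`-similarity. -/
def UnitriangularEquivalent [Fintype m] [LinearOrder m] [Fintype n] [LinearOrder n] [Semiring R]
    (A B : Matrix m n R) : Prop :=
  ∃ (C : Matrix m m R) (D : Matrix n n R),
    C.IsLowerUnitriangular ∧ D.IsUpperUnitriangular ∧ C * A * D = B

namespace UnitriangularEquivalent

variable [Fintype m] [LinearOrder m] [Fintype n] [LinearOrder n] [Semiring R]

theorem refl (A : Matrix m n R) : UnitriangularEquivalent A A :=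
  ⟨1, 1, isLowerUnitriangular_one, isUpperUnitriangular_one, by simp⟩

theorem trans {A B E : Matrix m n R} (hAB : UnitriangularEquivalent A B)
    (hBE : UnitriangularEquivalent B E) : UnitriangularEquivalent A E := by
  obtain ⟨C, D, hC, hD, rfl⟩ := hAB
  obtain ⟨C', D', hC', hD', rfl⟩ := hBE
  exact ⟨C' * C, D * D', hC'.mul hC, hD.mul hD', by simp only [Matrix.mul_assoc]⟩

end UnitriangularEquivalent

def IsIsolatedEntry [Zero R] (M : Matrix m n R) (i : m) (j : n) : Prop :=
  (∀ k ≠ i, M k j = 0) ∧ ∀ l ≠ j, M i l = 0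

def IsReducedOn [Zero R] (s : Set n) (M : Matrix m n R) : Prop :=
  ∀ i, ∀ j ∈ s, M i j ≠ 0 → M.IsIsolatedEntry i j

section Field

variable [Field K]

theorem exists_isLowerUnitriangular_mul_clear_col [Fintype m] [LinearOrder m] (M : Matrix m n K)
    {p : m} {t : n} (hp : M p t ≠ 0) (habove : ∀ i < p, M i t = 0) :
    ∃ C : Matrix m m K, C.IsLowerUnitriangular ∧ (∀ i ≠ p, (C * M) i t = 0) ∧
      (C * M) p = M p ∧ ∀ i j, (M i t = 0 ∨ M p j = 0) → (C * M) i j = M i j := by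
  set c : m → K := fun i => if p < i then M i t / M p t else 0
  have hc : ∀ i, M i t = 0 → c i = 0 := fun i hi => by simp [c, hi]
  refine ⟨1 - vecMulVec c (Pi.single p 1),
    isLowerUnitriangular_one_sub_vecMulVec_single fun i hi => if_neg hi.not_gt, ?_⟩
  simp only [one_sub_vecMulVec_single_mul, sub_apply, vecMulVec_apply]
  refine ⟨fun i hi => ?_, funext fun j => by simp [c, vecMulVec_apply], fun i j hij => ?_⟩
  · rcases hi.lt_or_gt with h | h
    · simp [hc i (habove i h), habove i h]
    · simp [c, h, div_mul_cancel₀ _ hp]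
  · rcases hij with h | h
    · simp [hc i h]
    · simp [h]

theorem exists_isUpperUnitriangular_mul_clear_row [Fintype n] [LinearOrder n] (M : Matrix m n K)
    {p : m} {t : n} (hp : M p t ≠ 0) (hleft : ∀ j < t, M p j = 0) :
    ∃ D : Matrix n n K, D.IsUpperUnitriangular ∧ (∀ j ≠ t, (M * D) p j = 0) ∧
      ∀ i j, (M p j = 0 ∨ M i t = 0) → (M * D) i j = M i j := by
  obtain ⟨C, hC, hcol, -, hfix⟩ := exists_isLowerUnitriangular_mul_clear_col Mᵀ hp hleft
  have hMC : M * Cᵀ = (C * Mᵀ)ᵀ := by rw [transpose_mul, transpose_transpose]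
  exact ⟨Cᵀ, hC.transpose, fun j hj => by rw [hMC]; exact hcol j hj,
    fun i j hij => by rw [hMC]; exact hfix j i hij⟩

variable [Fintype m] [LinearOrder m] [Fintype n] [LinearOrder n]

theorem IsReducedOn.exists_unitriangularEquivalent_isReducedOn_Iic {M : Matrix m n K} {t : n}
    (hM : M.IsReducedOn (Set.Iio t)) :
    ∃ B, UnitriangularEquivalent M B ∧ B.IsReducedOn (Set.Iic t) := by
  by_cases! hcol : ∀ i, M i t = 0
  · refine ⟨M, .refl M, fun i j hj hij => ?_⟩
    rcases (Set.mem_Iic.1 hj).lt_or_eq with hj | rfl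
    · exact hM i j hj hij
    · exact absurd (hcol i) hij
  obtain ⟨p, hp, hmin⟩ := wellFounded_lt.has_min {i | M i t ≠ 0} hcol
  have habove : ∀ i < p, M i t = 0 := fun i hi => by_contra fun h => hmin i h hi
  have hleft : ∀ j < t, M p j = 0 := fun j hj => by_contra fun h => hp ((hM p j hj h).2 t hj.ne')
  obtain ⟨C, hC, hCcol, hCrow, hCfix⟩ := exists_isLowerUnitriangular_mul_clear_col M hp habove
  set B := C * M
  obtain ⟨D, hD, hDrow, hDfix⟩ := exists_isUpperUnitriangular_mul_clear_row B
    (by rwa [hCrow]) (fun j hj => by rw [hCrow]; exact hleft j hj)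
  refine ⟨B * D, ⟨C, D, hC, hD, rfl⟩, fun i j hj hij => ?_⟩
  have hE : ∀ i ≠ p, (B * D) i = B i := fun i hi =>
    funext fun j => hDfix i j (.inr (hCcol i hi))
  have hB : ∀ i, ∀ j < t, B i j = M i j := fun i j hj => hCfix i j (.inr (hleft j hj))
  rcases (Set.mem_Iic.1 hj).lt_or_eq with hj | rfl
  · have hi : i ≠ p := by rintro rfl; exact hij (hDrow j hj.ne)
    rw [hE i hi, hB i j hj] at hij
    obtain ⟨hMcol, hMrow⟩ := hM i j hj hij
    have hEi : (B * D) i = M i := by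
      rw [hE i hi]; exact funext fun l => hCfix i l (.inl (hMrow t hj.ne'))
    refine ⟨fun k hk => ?_, fun l hl => by rw [hEi]; exact hMrow l hl⟩
    rcases eq_or_ne k p with rfl | hkp
    · exact hDrow j hj.ne
    · rw [hE k hkp, hB k j hj]; exact hMcol k hk
  · obtain rfl : i = p := by
      by_contra hi; exact hij (by rw [hE i hi]; exact hCcol i hi)
    exact ⟨fun k hk => by rw [hE k hk]; exact hCcol k hk, hDrow⟩

theorem exists_unitriangularEquivalent_isReducedOn_univ (A : Matrix m n K) :
    ∃ B, UnitriangularEquivalent A B ∧ B.IsReducedOn Set.univ := by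
  suffices ∀ s : Finset n, IsLowerSet (s : Set n) →
      ∃ B, UnitriangularEquivalent A B ∧ B.IsReducedOn s by
    simpa using this Finset.univ (by rw [Finset.coe_univ]; exact isLowerSet_univ)
  intro s
  induction s using Finset.induction_on_max with
  | empty => exact fun _ => ⟨A, .refl A, fun _ _ hj => absurd hj (by simp)⟩
  | insert a s hlt ih =>
    intro hs
    have hs_eq : (s : Set n) = Set.Iio a := by
      ext j
      refine ⟨hlt j, fun hj => ?_⟩
      simpa [hj.ne] using hs hj.le (by simp : a ∈ (insert a s : Finset n))
    obtain ⟨B, hAB, hB⟩ := ih (hs_eq ▸ isLowerSet_Iio a)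
    obtain ⟨E, hBE, hE⟩ := (hs_eq ▸ hB).exists_unitriangularEquivalent_isReducedOn_Iic
    exact ⟨E, hAB.trans hBE, by rwa [Finset.coe_insert, hs_eq, Set.Iio_insert]⟩

end Field

end Matrix

theorem inU_of_isReducedOn_univ {K : Type*} [Field K] {m : ℕ} {B : Matrix (Fin m) (Fin m) K}
    (hB : B.IsReducedOn Set.univ) : InU B :=
  ⟨fun i j k hj hk => by_contra fun hjk => hk ((hB i j trivial hj).2 k (Ne.symm hjk)),
    fun i j k hi hk => by_contra fun hik => hk ((hB i j trivial hi).1 k (Ne.symm hik))⟩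

/-- Lemma 3.7: every matrix is unitary μ-similar (μ = (1,…,1)) to a matrix
of `𝒰_m`. -/
theorem stmt_11 {K : Type*} [Field K] {m : ℕ} (A : Matrix (Fin m) (Fin m) K) :
    ∃ C D : Matrix (Fin m) (Fin m) K,
      (∀ i j : Fin m, i < j → C i j = 0) ∧ (∀ i : Fin m, C i i = 1) ∧
      (∀ i j : Fin m, j < i → D i j = 0) ∧ (∀ i : Fin m, D i i = 1) ∧
      InU (C * A * D) := by
  obtain ⟨B, ⟨C, D, hC, hD, rfl⟩, hB⟩ := exists_unitriangularEquivalent_isReducedOn_univ A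
  exact ⟨C, D, fun _ _ h => hC.1 h, hC.2, fun _ _ h => hD.1 h, hD.2, inU_of_isReducedOn_univ hB⟩
end

section
/- Suppose A, B ∈ 𝒰_m are unitary μ-similar (μ = (1,…,1)): B = C A D for some lower triangular C and upper triangular D, both with all diagonal entries equal to 1. Then A = B. -/
open Matrix

/-- Lemma 3.8: two matrices of `𝒰_m` that are unitary μ-similar (μ = (1,…,1))
are equal. -/
theorem stmt_12 {K : Type*} [Field K] {m : ℕ}
    (A B C D : Matrix (Fin m) (Fin m) K) (hA : InU A) (hB : InU B)
    (hClow : ∀ i j : Fin m, i < j → C i j = 0) (hCdiag : ∀ i : Fin m, C i i = 1)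
    (hDup : ∀ i j : Fin m, j < i → D i j = 0) (hDdiag : ∀ i : Fin m, D i i = 1)
    (h : B = C * A * D) :
    A = B := by
  -- D is upper triangular with unit diagonal, hence invertible with upper
  -- triangular inverse with unit diagonal.
  have hDtri : D.BlockTriangular id := fun i j hij => hDup i j hij
  have hdet : D.det = 1 := by
    rw [Matrix.det_of_upperTriangular hDtri]
    simp [hDdiag]
  have hInv : Invertible D := D.invertibleOfIsUnitDet (by simp [hdet])
  set E := D⁻¹ with hE
  have hEtri : E.BlockTriangular id := blockTriangular_inv_of_blockTriangular hDtri
  have hDE : D * E = 1 := Matrix.mul_inv_of_invertible D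
  have hEjj : ∀ j : Fin m, E j j = 1 := by
    intro j
    have h1 : (D * E) j j = 1 := by rw [hDE]; simp
    rw [Matrix.mul_apply, Finset.sum_eq_single j] at h1
    · rw [hDdiag, one_mul] at h1; exact h1
    · intro l _ hl
      rcases lt_or_gt_of_ne hl with h1 | h1
      · rw [hDup j l h1, zero_mul]
      · rw [hEtri h1, mul_zero]
    · simp
  have hCA : C * A = B * E := by
    rw [h, Matrix.mul_assoc (C * A) D E, hDE, Matrix.mul_one]
  have key : ∀ n : ℕ, ∀ i j : Fin m, (i : ℕ) + j = n → A i j = B i j := by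
    intro n
    induction n using Nat.strong_induction_on with
    | _ n ih =>
      intro i j hn
      by_cases hcol : ∃ k : Fin m, k < i ∧ A k j ≠ 0
      · obtain ⟨k, hki, hk⟩ := hcol
        have hki' : (k : ℕ) < i := hki
        have hBk : B k j ≠ 0 := by
          rw [← ih ((k : ℕ) + j) (by omega) k j rfl]; exact hk
        have hAij : A i j = 0 := by
          by_contra hne
          exact absurd (hA.2 k j i hk hne) (ne_of_lt hki)
        have hBij : B i j = 0 := by
          by_contra hne
          exact absurd (hB.2 k j i hBk hne) (ne_of_lt hki)
        rw [hAij, hBij]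
      · by_cases hrow : ∃ l : Fin m, l < j ∧ A i l ≠ 0
        · obtain ⟨l, hlj, hl⟩ := hrow
          have hlj' : (l : ℕ) < j := hlj
          have hBl : B i l ≠ 0 := by
            rw [← ih ((i : ℕ) + l) (by omega) i l rfl]; exact hl
          have hAij : A i j = 0 := by
            by_contra hne
            exact absurd (hA.1 i l j hl hne) (ne_of_lt hlj)
          have hBij : B i j = 0 := by
            by_contra hne
            exact absurd (hB.1 i l j hBl hne) (ne_of_lt hlj)
          rw [hAij, hBij]
        · push_neg at hcol hrow
          have hcalc : (C * A) i j = (B * E) i j := by rw [hCA]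
          have hL : (C * A) i j = A i j := by
            rw [Matrix.mul_apply, Finset.sum_eq_single i]
            · rw [hCdiag, one_mul]
            · intro k _ hk
              rcases lt_or_gt_of_ne hk with h1 | h1
              · rw [hcol k h1, mul_zero]
              · rw [hClow i k h1, zero_mul]
            · simp
          have hR : (B * E) i j = B i j := by
            rw [Matrix.mul_apply, Finset.sum_eq_single j]
            · rw [hEjj, mul_one]
            · intro l _ hl
              rcases lt_or_gt_of_ne hl with h1 | h1
              · have h0 : B i l = 0 := by
                  have hlj' : (l : ℕ) < j := h1
                  rw [← ih ((i : ℕ) + l) (by omega) i l rfl]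
                  exact hrow l h1
                rw [h0, zero_mul]
              · rw [hEtri h1, mul_zero]
            · simp
          rw [← hL, hcalc, hR]
  ext i j
  exact key ((i : ℕ) + j) i j rfl
end

section
/- 𝒰_m is a set of canonical matrices for unitary μ-similarity (μ = (1,…,1)): for every A ∈ M_m(K) there exists exactly one matrix B ∈ 𝒰_m such that A and B are unitary μ-similar. -/
open Matrix

/-- Unitary μ-similarity for μ = (1,…,1): conjugation `B = C A D` with `C` lower
triangular and `D` upper triangular, both with unit diagonal. -/
def UnitaryMuSimilar {K : Type*} [Field K] {m : ℕ}
    (A B : Matrix (Fin m) (Fin m) K) : Prop :=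
  ∃ C D : Matrix (Fin m) (Fin m) K,
    (∀ i j : Fin m, i < j → C i j = 0) ∧ (∀ i : Fin m, C i i = 1) ∧
    (∀ i j : Fin m, j < i → D i j = 0) ∧ (∀ i : Fin m, D i i = 1) ∧
    C * A * D = B

namespace Stmt13Aux

variable {K : Type*} [Field K]

/-- rook matrix (rectangular): at most one nonzero entry per row and per column. -/
def Rook {m n : ℕ} (B : Matrix (Fin m) (Fin n) K) : Prop :=
  (∀ (i : Fin m) (j k : Fin n), B i j ≠ 0 → B i k ≠ 0 → j = k) ∧
  (∀ (i : Fin m) (j : Fin n) (k : Fin m), B i j ≠ 0 → B k j ≠ 0 → i = k)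

def LowerUnit {m : ℕ} (C : Matrix (Fin m) (Fin m) K) : Prop :=
  (∀ i j, i < j → C i j = 0) ∧ (∀ i, C i i = 1)

def UpperUnit {m : ℕ} (D : Matrix (Fin m) (Fin m) K) : Prop :=
  (∀ i j, j < i → D i j = 0) ∧ (∀ i, D i i = 1)

lemma UpperUnit.blockTriangular {m : ℕ} {D : Matrix (Fin m) (Fin m) K}
    (h : UpperUnit D) : D.BlockTriangular id := fun i j hij => h.1 i j hij

lemma UpperUnit.isUnit_det {m : ℕ} {D : Matrix (Fin m) (Fin m) K}
    (h : UpperUnit D) : IsUnit D.det := by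
  rw [Matrix.det_of_upperTriangular h.blockTriangular]
  simp [h.2]

lemma UpperUnit.mul_inv {m : ℕ} {D : Matrix (Fin m) (Fin m) K}
    (h : UpperUnit D) : D * D⁻¹ = 1 := Matrix.mul_nonsing_inv _ h.isUnit_det

lemma UpperUnit.inv_mul {m : ℕ} {D : Matrix (Fin m) (Fin m) K}
    (h : UpperUnit D) : D⁻¹ * D = 1 := Matrix.nonsing_inv_mul _ h.isUnit_det

lemma UpperUnit.inv {m : ℕ} {D : Matrix (Fin m) (Fin m) K}
    (h : UpperUnit D) : UpperUnit D⁻¹ := by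
  have : Invertible D := D.invertibleOfIsUnitDet h.isUnit_det
  have htri : D⁻¹.BlockTriangular id :=
    Matrix.blockTriangular_inv_of_blockTriangular h.blockTriangular
  constructor
  · intro i j hij; exact htri hij
  · intro i
    have h1 : (D⁻¹ * D) i i = 1 := by rw [h.inv_mul]; simp
    rw [Matrix.mul_apply] at h1
    rw [Finset.sum_eq_single i ?_ (by simp)] at h1
    · rw [h.2 i, mul_one] at h1; exact h1
    · intro k _ hk
      rcases lt_or_gt_of_ne hk with hlt | hgt
      · rw [htri (show id k < id i from hlt)]; ring
      · rw [h.1 k i hgt]; ring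

lemma LowerUnit.transpose_upper {m : ℕ} {C : Matrix (Fin m) (Fin m) K}
    (h : LowerUnit C) : UpperUnit Cᵀ :=
  ⟨fun i j hij => h.1 j i hij, h.2⟩

lemma UpperUnit.transpose_lower {m : ℕ} {D : Matrix (Fin m) (Fin m) K}
    (h : UpperUnit D) : LowerUnit Dᵀ :=
  ⟨fun i j hij => h.1 j i hij, h.2⟩

lemma LowerUnit.inv {m : ℕ} {C : Matrix (Fin m) (Fin m) K}
    (h : LowerUnit C) : LowerUnit C⁻¹ := by
  have := h.transpose_upper.inv
  rw [← Matrix.transpose_nonsing_inv] at this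
  have h2 := this.transpose_lower
  rwa [Matrix.transpose_transpose] at h2

lemma LowerUnit.mul_inv {m : ℕ} {C : Matrix (Fin m) (Fin m) K}
    (h : LowerUnit C) : C * C⁻¹ = 1 := by
  apply Matrix.mul_nonsing_inv
  have := h.transpose_upper.isUnit_det
  rwa [Matrix.det_transpose] at this

lemma LowerUnit.inv_mul {m : ℕ} {C : Matrix (Fin m) (Fin m) K}
    (h : LowerUnit C) : C⁻¹ * C = 1 := by
  apply Matrix.nonsing_inv_mul
  have := h.transpose_upper.isUnit_det
  rwa [Matrix.det_transpose] at this

lemma LowerUnit.mul {m : ℕ} {C₁ C₂ : Matrix (Fin m) (Fin m) K}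
    (h₁ : LowerUnit C₁) (h₂ : LowerUnit C₂) : LowerUnit (C₁ * C₂) := by
  constructor
  · intro i j hij
    rw [Matrix.mul_apply]
    apply Finset.sum_eq_zero
    intro k _
    rcases lt_or_ge i k with hlt | hle
    · rw [h₁.1 i k hlt]; ring
    · rw [h₂.1 k j (lt_of_le_of_lt hle hij)]; ring
  · intro i
    rw [Matrix.mul_apply, Finset.sum_eq_single i ?_ (by simp)]
    · rw [h₁.2, h₂.2, one_mul]
    · intro k _ hk
      rcases lt_or_gt_of_ne hk with hlt | hgt
      · rw [h₂.1 k i hlt]; ring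
      · rw [h₁.1 i k hgt]; ring

lemma UpperUnit.mul {m : ℕ} {D₁ D₂ : Matrix (Fin m) (Fin m) K}
    (h₁ : UpperUnit D₁) (h₂ : UpperUnit D₂) : UpperUnit (D₁ * D₂) := by
  have := (h₂.transpose_lower.mul h₁.transpose_lower).transpose_upper
  rwa [← Matrix.transpose_mul, Matrix.transpose_transpose] at this


def liftLower {m : ℕ} (C' : Matrix (Fin m) (Fin m) K) :
    Matrix (Fin (m + 1)) (Fin (m + 1)) K :=
  Matrix.of fun i j =>
    Fin.cases (Fin.cases (1 : K) (fun _ => 0) j)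
      (fun i' => Fin.cases (0 : K) (fun j' => C' i' j') j) i

@[simp] lemma liftLower_zero_zero {m : ℕ} (C' : Matrix (Fin m) (Fin m) K) :
    liftLower C' 0 0 = 1 := by
  simp only [liftLower, Matrix.of_apply, Fin.cases_zero]

@[simp] lemma liftLower_zero_succ {m : ℕ} (C' : Matrix (Fin m) (Fin m) K) (j : Fin m) :
    liftLower C' 0 j.succ = 0 := by
  simp only [liftLower, Matrix.of_apply, Fin.cases_zero, Fin.cases_succ]

@[simp] lemma liftLower_succ_zero {m : ℕ} (C' : Matrix (Fin m) (Fin m) K) (i : Fin m) :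
    liftLower C' i.succ 0 = 0 := by
  simp only [liftLower, Matrix.of_apply, Fin.cases_zero, Fin.cases_succ]

@[simp] lemma liftLower_succ_succ {m : ℕ} (C' : Matrix (Fin m) (Fin m) K) (i j : Fin m) :
    liftLower C' i.succ j.succ = C' i j := by
  simp only [liftLower, Matrix.of_apply, Fin.cases_succ]

lemma liftLower_lowerUnit {m : ℕ} {C' : Matrix (Fin m) (Fin m) K}
    (h : LowerUnit C') : LowerUnit (liftLower C') := by
  constructor
  · intro i j hij
    induction i using Fin.cases with
    | zero =>
      induction j using Fin.cases with
      | zero => exact absurd hij (lt_irrefl _)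
      | succ j' => simp
    | succ i' =>
      induction j using Fin.cases with
      | zero => exact absurd hij (by simp [Fin.lt_def])
      | succ j' =>
        rw [liftLower_succ_succ]
        exact h.1 _ _ (Fin.succ_lt_succ_iff.mp hij)
  · intro i
    induction i using Fin.cases with
    | zero => simp
    | succ i' => rw [liftLower_succ_succ]; exact h.2 i'

lemma liftLower_mul_zero {m n : ℕ} (C' : Matrix (Fin m) (Fin m) K)
    (X : Matrix (Fin (m + 1)) (Fin n) K) (j : Fin n) :
    (liftLower C' * X) 0 j = X 0 j := by
  rw [Matrix.mul_apply, Fin.sum_univ_succ]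
  simp

lemma liftLower_mul_succ {m n : ℕ} (C' : Matrix (Fin m) (Fin m) K)
    (X : Matrix (Fin (m + 1)) (Fin n) K) (i : Fin m) (j : Fin n) :
    (liftLower C' * X) i.succ j = ∑ i', C' i i' * X i'.succ j := by
  rw [Matrix.mul_apply, Fin.sum_univ_succ]
  simp

def liftUpperAt {n : ℕ} (j₀ : Fin (n + 1)) (D' : Matrix (Fin n) (Fin n) K) :
    Matrix (Fin (n + 1)) (Fin (n + 1)) K :=
  Matrix.of fun l l' =>
    Fin.insertNth (α := fun _ => K) j₀
      (Fin.insertNth (α := fun _ => K) j₀ (1 : K) (fun _ => 0) l')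
      (fun a => Fin.insertNth (α := fun _ => K) j₀ (0 : K) (fun b => D' a b) l') l

@[simp] lemma liftUpperAt_same_same {n : ℕ} (j₀ : Fin (n + 1))
    (D' : Matrix (Fin n) (Fin n) K) : liftUpperAt j₀ D' j₀ j₀ = 1 := by
  simp [liftUpperAt]

@[simp] lemma liftUpperAt_same_succAbove {n : ℕ} (j₀ : Fin (n + 1))
    (D' : Matrix (Fin n) (Fin n) K) (b : Fin n) :
    liftUpperAt j₀ D' j₀ (j₀.succAbove b) = 0 := by
  simp [liftUpperAt]

@[simp] lemma liftUpperAt_succAbove_same {n : ℕ} (j₀ : Fin (n + 1))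
    (D' : Matrix (Fin n) (Fin n) K) (a : Fin n) :
    liftUpperAt j₀ D' (j₀.succAbove a) j₀ = 0 := by
  simp [liftUpperAt]

@[simp] lemma liftUpperAt_succAbove_succAbove {n : ℕ} (j₀ : Fin (n + 1))
    (D' : Matrix (Fin n) (Fin n) K) (a b : Fin n) :
    liftUpperAt j₀ D' (j₀.succAbove a) (j₀.succAbove b) = D' a b := by
  simp [liftUpperAt]

lemma liftUpperAt_upperUnit {n : ℕ} {j₀ : Fin (n + 1)} {D' : Matrix (Fin n) (Fin n) K}
    (h : UpperUnit D') : UpperUnit (liftUpperAt j₀ D') := by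
  constructor
  · intro l l' hl
    rcases eq_or_ne l j₀ with rfl | hlj
    · rcases eq_or_ne l' l with rfl | hl'j
      · exact absurd hl (lt_irrefl _)
      · obtain ⟨b, rfl⟩ := Fin.exists_succAbove_eq hl'j
        simp
    · obtain ⟨a, rfl⟩ := Fin.exists_succAbove_eq hlj
      rcases eq_or_ne l' j₀ with rfl | hl'j
      · simp
      · obtain ⟨b, rfl⟩ := Fin.exists_succAbove_eq hl'j
        rw [liftUpperAt_succAbove_succAbove]
        exact h.1 _ _ (by rwa [← Fin.succAbove_lt_succAbove_iff (p := j₀)])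
  · intro l
    rcases eq_or_ne l j₀ with rfl | hlj
    · simp
    · obtain ⟨a, rfl⟩ := Fin.exists_succAbove_eq hlj
      rw [liftUpperAt_succAbove_succAbove]
      exact h.2 a

lemma mul_liftUpperAt_same {m' n : ℕ} (j₀ : Fin (n + 1)) (D' : Matrix (Fin n) (Fin n) K)
    (X : Matrix (Fin m') (Fin (n + 1)) K) (i : Fin m') :
    (X * liftUpperAt j₀ D') i j₀ = X i j₀ := by
  rw [Matrix.mul_apply, Fin.sum_univ_succAbove _ j₀]
  simp

lemma mul_liftUpperAt_succAbove {m' n : ℕ} (j₀ : Fin (n + 1)) (D' : Matrix (Fin n) (Fin n) K)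
    (X : Matrix (Fin m') (Fin (n + 1)) K) (i : Fin m') (b : Fin n) :
    (X * liftUpperAt j₀ D') i (j₀.succAbove b) = ∑ a, X i (j₀.succAbove a) * D' a b := by
  rw [Matrix.mul_apply, Fin.sum_univ_succAbove _ j₀]
  simp

lemma exists_canon : ∀ (m n : ℕ) (A : Matrix (Fin m) (Fin n) K),
    ∃ (C : Matrix (Fin m) (Fin m) K) (D : Matrix (Fin n) (Fin n) K),
      LowerUnit C ∧ UpperUnit D ∧ Rook (C * A * D) := by
  intro m
  induction m with
  | zero =>
    intro n A
    exact ⟨1, 1, ⟨fun i => i.elim0, fun i => i.elim0⟩,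
      ⟨fun i j h => Matrix.one_apply_ne (ne_of_gt h), fun i => Matrix.one_apply_eq i⟩,
      fun i => i.elim0, fun i => i.elim0⟩
  | succ m ih =>
    intro n A
    classical
    by_cases hrow : ∀ j, A 0 j = 0
    · obtain ⟨C', D', hC', hD', hR⟩ := ih n (A.submatrix Fin.succ id)
      refine ⟨liftLower C', D', liftLower_lowerUnit hC', hD', ?_⟩
      have hzero : ∀ j, (liftLower C' * A * D') 0 j = 0 := by
        intro j
        rw [Matrix.mul_apply]
        apply Finset.sum_eq_zero
        intro l _
        rw [liftLower_mul_zero, hrow l, zero_mul]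
      have hsucc : ∀ (i : Fin m) (j : Fin n), (liftLower C' * A * D') i.succ j
          = (C' * A.submatrix Fin.succ id * D') i j := by
        intro i j
        rw [Matrix.mul_apply, Matrix.mul_apply]
        refine Finset.sum_congr rfl fun l _ => ?_
        rw [liftLower_mul_succ, Matrix.mul_apply]
        refine congrArg (· * D' l j) ?_
        exact Finset.sum_congr rfl fun i' _ => by rw [Matrix.submatrix_apply]; rfl
      constructor
      · intro i j k hj hk
        rcases Fin.eq_zero_or_eq_succ i with rfl | ⟨i', rfl⟩
        · exact absurd (hzero j) hj
        · rw [hsucc] at hj hk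
          exact hR.1 i' j k hj hk
      · intro i j k hj hk
        rcases Fin.eq_zero_or_eq_succ i with rfl | ⟨i', rfl⟩
        · exact absurd (hzero j) hj
        · rcases Fin.eq_zero_or_eq_succ k with rfl | ⟨k', rfl⟩
          · exact absurd (hzero j) hk
          · rw [hsucc] at hj hk
            exact congrArg Fin.succ (hR.2 i' j k' hj hk)
    · push_neg at hrow
      obtain ⟨jw, hjw⟩ := hrow
      cases n with
      | zero => exact jw.elim0
      | succ n' =>
        have hsne : (Finset.univ.filter (fun j => A 0 j ≠ 0)).Nonempty :=
          ⟨jw, by simp [hjw]⟩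
        set j₀ := (Finset.univ.filter (fun j => A 0 j ≠ 0)).min' hsne with hj₀def
        have ha : A 0 j₀ ≠ 0 := by
          have := Finset.min'_mem _ hsne
          rw [← hj₀def] at this
          simpa using this
        have hmin : ∀ j, j < j₀ → A 0 j = 0 := by
          intro j hj
          by_contra hne
          have hle : j₀ ≤ j := Finset.min'_le _ j (by simp [hne])
          exact absurd hj (not_lt.mpr hle)
        set E : Matrix (Fin (m+1)) (Fin (m+1)) K :=
          Matrix.of fun i k => if k = 0 ∧ i ≠ 0 then -(A i j₀ / A 0 j₀) else 0 with hE
        set F : Matrix (Fin (n'+1)) (Fin (n'+1)) K :=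
          Matrix.of fun l l' => if l = j₀ ∧ l' ≠ j₀ then -(A 0 l' / A 0 j₀) else 0 with hF
        set C₀ : Matrix (Fin (m+1)) (Fin (m+1)) K := 1 + E with hC₀def
        set D₀ : Matrix (Fin (n'+1)) (Fin (n'+1)) K := 1 + F with hD₀def
        have hC₀ : LowerUnit C₀ := by
          rw [hC₀def]
          constructor
          · intro i j hij
            have hcond : ¬(j = 0 ∧ i ≠ 0) := by
              rintro ⟨rfl, -⟩
              exact absurd hij (by simp [Fin.lt_def])
            rw [Matrix.add_apply, Matrix.one_apply_ne (ne_of_lt hij), hE, Matrix.of_apply,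
              if_neg hcond, add_zero]
          · intro i
            rw [Matrix.add_apply, Matrix.one_apply_eq, hE, Matrix.of_apply,
              if_neg (fun h => h.2 h.1), add_zero]
        have hD₀ : UpperUnit D₀ := by
          rw [hD₀def]
          constructor
          · intro l l' hll
            rw [Matrix.add_apply, Matrix.one_apply_ne (ne_of_gt hll), hF, Matrix.of_apply]
            rcases eq_or_ne l j₀ with rfl | hlj
            · rw [if_pos ⟨rfl, ne_of_lt hll⟩, hmin l' hll, zero_div, neg_zero, add_zero]
            · rw [if_neg (fun h => hlj h.1), add_zero]
          · intro l
            rw [Matrix.add_apply, Matrix.one_apply_eq, hF, Matrix.of_apply,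
              if_neg (fun h => h.2 h.1), add_zero]
        have hY : ∀ i j, (C₀ * A) i j = A i j + E i 0 * A 0 j := by
          intro i j
          rw [hC₀def, Matrix.add_mul, Matrix.one_mul, Matrix.add_apply, Matrix.mul_apply]
          congr 1
          refine Finset.sum_eq_single 0 (fun k _ hk => ?_) (by simp)
          rw [hE, Matrix.of_apply, if_neg (fun h => hk h.1), zero_mul]
        have hYrow0 : ∀ j, (C₀ * A) 0 j = A 0 j := by
          intro j
          rw [hY, hE, Matrix.of_apply, if_neg (fun h => h.2 rfl), zero_mul, add_zero]
        have hYcol : ∀ i, i ≠ 0 → (C₀ * A) i j₀ = 0 := by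
          intro i hi
          rw [hY, hE, Matrix.of_apply, if_pos ⟨rfl, hi⟩, neg_mul,
            div_mul_cancel₀ _ ha, add_neg_cancel]
        have hA₁ap : ∀ i j, (C₀ * A * D₀) i j
            = (C₀ * A) i j + (C₀ * A) i j₀ * F j₀ j := by
          intro i j
          rw [hD₀def, Matrix.mul_add, Matrix.mul_one, Matrix.add_apply, Matrix.mul_apply]
          congr 1
          refine Finset.sum_eq_single j₀ (fun l _ hl => ?_) (fun h => absurd (Finset.mem_univ _) h)
          simp only [Matrix.of_apply]
          rw [hF, Matrix.of_apply, if_neg (fun h : l = j₀ ∧ j ≠ j₀ => hl h.1), mul_zero]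
        have f1 : (C₀ * A * D₀) 0 j₀ = A 0 j₀ := by
          rw [hA₁ap, hYrow0, hF, Matrix.of_apply, if_neg (fun h => h.2 rfl),
            mul_zero, add_zero]
        have f2 : ∀ j, j ≠ j₀ → (C₀ * A * D₀) 0 j = 0 := by
          intro j hj
          have hc : A 0 j₀ * (A 0 j / A 0 j₀) = A 0 j := by
            rw [mul_comm, div_mul_cancel₀ _ ha]
          rw [hA₁ap, hYrow0 j, hYrow0 j₀, hF, Matrix.of_apply, if_pos ⟨rfl, hj⟩, mul_neg, hc,
            add_neg_cancel]
        have f3 : ∀ i : Fin (m+1), i ≠ 0 → (C₀ * A * D₀) i j₀ = 0 := by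
          intro i hi
          rw [hA₁ap, hYcol i hi, zero_mul, add_zero]
        obtain ⟨C', D', hC', hD', hR⟩ :=
          ih n' ((C₀ * A * D₀).submatrix Fin.succ j₀.succAbove)
        refine ⟨liftLower C' * C₀, D₀ * liftUpperAt j₀ D',
          (liftLower_lowerUnit hC').mul hC₀, hD₀.mul (liftUpperAt_upperUnit hD'), ?_⟩
        have hprod : liftLower C' * C₀ * A * (D₀ * liftUpperAt j₀ D')
            = liftLower C' * (C₀ * A * D₀) * liftUpperAt j₀ D' := by
          simp only [Matrix.mul_assoc]
        rw [hprod]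
        have z2 : ∀ b, (liftLower C' * (C₀ * A * D₀) * liftUpperAt j₀ D')
            0 (j₀.succAbove b) = 0 := by
          intro b
          rw [mul_liftUpperAt_succAbove]
          apply Finset.sum_eq_zero
          intro a' _
          rw [liftLower_mul_zero, f2 _ (j₀.succAbove_ne a'), zero_mul]
        have z3 : ∀ i : Fin m, (liftLower C' * (C₀ * A * D₀) * liftUpperAt j₀ D')
            i.succ j₀ = 0 := by
          intro i
          rw [mul_liftUpperAt_same, liftLower_mul_succ]
          apply Finset.sum_eq_zero
          intro i' _
          rw [f3 _ (Fin.succ_ne_zero i'), mul_zero]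
        have z4 : ∀ (i : Fin m) (b : Fin n'),
            (liftLower C' * (C₀ * A * D₀) * liftUpperAt j₀ D') i.succ (j₀.succAbove b)
            = (C' * ((C₀ * A * D₀).submatrix Fin.succ j₀.succAbove) * D') i b := by
          intro i b
          rw [mul_liftUpperAt_succAbove, Matrix.mul_apply]
          refine Finset.sum_congr rfl fun a' _ => ?_
          rw [liftLower_mul_succ, Matrix.mul_apply]
          refine congrArg (· * D' a' b) ?_
          exact Finset.sum_congr rfl fun i' _ => by rw [Matrix.submatrix_apply]
        constructor
        · intro i j k hj hk
          rcases Fin.eq_zero_or_eq_succ i with rfl | ⟨i', rfl⟩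
          · have pj : j = j₀ := by
              by_contra hne
              obtain ⟨b, rfl⟩ := Fin.exists_succAbove_eq hne
              exact hj (z2 b)
            have pk : k = j₀ := by
              by_contra hne
              obtain ⟨b, rfl⟩ := Fin.exists_succAbove_eq hne
              exact hk (z2 b)
            rw [pj, pk]
          · have pj : j ≠ j₀ := fun h => hj (h ▸ z3 i')
            have pk : k ≠ j₀ := fun h => hk (h ▸ z3 i')
            obtain ⟨b, rfl⟩ := Fin.exists_succAbove_eq pj
            obtain ⟨b', rfl⟩ := Fin.exists_succAbove_eq pk
            rw [z4] at hj hk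
            exact congrArg j₀.succAbove (hR.1 i' b b' hj hk)
        · intro i j k hj hk
          rcases Fin.eq_zero_or_eq_succ i with rfl | ⟨i', rfl⟩
          · rcases Fin.eq_zero_or_eq_succ k with rfl | ⟨k', rfl⟩
            · rfl
            · have pj : j = j₀ := by
                by_contra hne
                obtain ⟨b, rfl⟩ := Fin.exists_succAbove_eq hne
                exact hj (z2 b)
              rw [pj] at hk
              exact absurd (z3 k') hk
          · rcases Fin.eq_zero_or_eq_succ k with rfl | ⟨k', rfl⟩
            · have pj : j = j₀ := by
                by_contra hne
                obtain ⟨b, rfl⟩ := Fin.exists_succAbove_eq hne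
                exact hk (z2 b)
              rw [pj] at hj
              exact absurd (z3 i') hj
            · have pj : j ≠ j₀ := fun h => hj (h ▸ z3 i')
              obtain ⟨b, rfl⟩ := Fin.exists_succAbove_eq pj
              rw [z4] at hj hk
              exact congrArg Fin.succ (hR.2 i' b k' hj hk)
lemma key_lemma {m n : ℕ} (M B B' : Matrix (Fin m) (Fin n) K)
    (hB : Rook B) (hB' : Rook B')
    (h1 : ∀ (k : Fin m) (j : Fin n), B k j ≠ 0 → M k j = B k j ∧ ∀ i, i < k → M i j = 0)
    (h1' : ∀ j : Fin n, (∀ k, B k j = 0) → ∀ i, M i j = 0)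
    (h2 : ∀ (i : Fin m) (l : Fin n), B' i l ≠ 0 → M i l = B' i l ∧ ∀ j, j < l → M i j = 0)
    (h2' : ∀ i : Fin m, (∀ l, B' i l = 0) → ∀ j, M i j = 0) :
    ∀ (k : Fin m) (j : Fin n), B k j ≠ 0 → B' k j = B k j := by
  have main : ∀ t : ℕ, ∀ k : Fin m, (k : ℕ) < t → ∀ j, B k j ≠ 0 → B' k j = B k j := by
    intro t
    induction t with
    | zero => intro k hk; exact absurd hk (Nat.not_lt_zero _)
    | succ t IH =>
      intro k hk j hBkj
      have hMkj : M k j = B k j := (h1 k j hBkj).1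
      have hrowne : ¬ ∀ l, B' k l = 0 := by
        intro h
        exact hBkj (hMkj.symm.trans (h2' k h j))
      push_neg at hrowne
      obtain ⟨l, hl⟩ := hrowne
      have h2l := h2 k l hl
      have hlj : l ≤ j := by
        by_contra hgt
        push_neg at hgt
        exact hBkj (hMkj.symm.trans (h2l.2 j hgt))
      rcases eq_or_lt_of_le hlj with rfl | hlt
      · exact h2l.1.symm.trans hMkj
      · have hcolne : ¬ ∀ k', B k' l = 0 := by
          intro h
          exact hl (h2l.1.symm.trans (h1' l h k))
        push_neg at hcolne
        obtain ⟨k₁, hk₁⟩ := hcolne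
        have h1k₁ := h1 k₁ l hk₁
        have hk₁k : k₁ ≤ k := by
          by_contra hgt
          push_neg at hgt
          exact hl (h2l.1.symm.trans (h1k₁.2 k hgt))
        rcases eq_or_lt_of_le hk₁k with rfl | hklt
        · exact absurd (hB.1 k₁ l j hk₁ hBkj) (ne_of_lt hlt)
        · have hB'k₁ : B' k₁ l = B k₁ l :=
            IH k₁ (by have hv : (k₁ : ℕ) < (k : ℕ) := hklt; omega) l hk₁
          have hkk₁ : k = k₁ := hB'.2 k l k₁ hl (hB'k₁ ▸ hk₁)
          exact absurd hkk₁ (ne_of_gt hklt)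
  intro k j
  exact main ((k : ℕ) + 1) k (Nat.lt_succ_self _) j

lemma Rook.transpose {m n : ℕ} {B : Matrix (Fin m) (Fin n) K} (h : Rook B) : Rook Bᵀ :=
  ⟨fun i j k hj hk => h.2 j i k hj hk, fun i j k hj hk => h.1 j i k hj hk⟩

lemma rook_unique {m : ℕ} {B₁ B₂ C D : Matrix (Fin m) (Fin m) K}
    (hB₁ : Rook B₁) (hB₂ : Rook B₂) (hC : LowerUnit C) (hD : UpperUnit D)
    (heq : C * B₁ * D = B₂) : B₁ = B₂ := by
  have hDinv := hD.inv
  have hM : C * B₁ = B₂ * D⁻¹ := by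
    rw [← heq, Matrix.mul_assoc, hD.mul_inv, Matrix.mul_one]
  have h1 : ∀ k j, B₁ k j ≠ 0 → (C * B₁) k j = B₁ k j ∧ ∀ i, i < k → (C * B₁) i j = 0 := by
    intro k j hkj
    have hall : ∀ i, (C * B₁) i j = C i k * B₁ k j := by
      intro i
      rw [Matrix.mul_apply]
      refine Finset.sum_eq_single k (fun k' _ hk' => ?_) (fun h => absurd (Finset.mem_univ _) h)
      rcases eq_or_ne (B₁ k' j) 0 with hz | hnz
      · rw [hz, mul_zero]
      · exact absurd (hB₁.2 k' j k hnz hkj) hk'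
    constructor
    · rw [hall k, hC.2 k, one_mul]
    · intro i hik
      rw [hall i, hC.1 i k hik, zero_mul]
  have h1' : ∀ j, (∀ k, B₁ k j = 0) → ∀ i, (C * B₁) i j = 0 := by
    intro j h i
    rw [Matrix.mul_apply]
    exact Finset.sum_eq_zero fun k _ => by rw [h k, mul_zero]
  have h2 : ∀ i l, B₂ i l ≠ 0 → (C * B₁) i l = B₂ i l ∧ ∀ j, j < l → (C * B₁) i j = 0 := by
    intro i l hil
    have hall : ∀ j, (C * B₁) i j = B₂ i l * D⁻¹ l j := by
      intro j
      rw [hM, Matrix.mul_apply]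
      refine Finset.sum_eq_single l (fun l' _ hl' => ?_) (fun h => absurd (Finset.mem_univ _) h)
      rcases eq_or_ne (B₂ i l') 0 with hz | hnz
      · rw [hz, zero_mul]
      · exact absurd (hB₂.1 i l' l hnz hil) hl'
    constructor
    · rw [hall l, hDinv.2 l, mul_one]
    · intro j hjl
      rw [hall j, hDinv.1 l j hjl, mul_zero]
  have h2' : ∀ i, (∀ l, B₂ i l = 0) → ∀ j, (C * B₁) i j = 0 := by
    intro i h j
    rw [hM, Matrix.mul_apply]
    exact Finset.sum_eq_zero fun l _ => by rw [h l, zero_mul]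
  have dir1 := key_lemma (C * B₁) B₁ B₂ hB₁ hB₂ h1 h1' h2 h2'
  have dir2 := key_lemma (C * B₁)ᵀ B₂ᵀ B₁ᵀ hB₂.transpose hB₁.transpose
    (fun k j h => ⟨(h2 j k h).1, fun i hik => (h2 j k h).2 i hik⟩)
    (fun j h i => h2' j h i)
    (fun i l h => ⟨(h1 l i h).1, fun j hjl => (h1 l i h).2 j hjl⟩)
    (fun i h j => h1' i h j)
  ext i j
  rcases eq_or_ne (B₁ i j) 0 with h0 | hne
  · rcases eq_or_ne (B₂ i j) 0 with h0' | hne'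
    · rw [h0, h0']
    · exact dir2 j i hne'
  · exact (dir1 i j hne).symm
end Stmt13Aux


/-- Proposition 3.3: `𝒰_m` is a set of canonical matrices for unitary
μ-similarity (μ = (1,…,1)). -/
theorem stmt_13 {K : Type*} [Field K] {m : ℕ} (A : Matrix (Fin m) (Fin m) K) :
    ∃! B : Matrix (Fin m) (Fin m) K, InU B ∧ UnitaryMuSimilar A B := by
  obtain ⟨C, D, hC, hD, hR⟩ := Stmt13Aux.exists_canon m m A
  refine ⟨C * A * D, ⟨⟨hR.1, hR.2⟩, C, D, hC.1, hC.2, hD.1, hD.2, rfl⟩, ?_⟩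
  rintro B' ⟨hB', C', D', hC'l, hC'd, hD'u, hD'd, hEq⟩
  have hC' : Stmt13Aux.LowerUnit C' := ⟨hC'l, hC'd⟩
  have hD' : Stmt13Aux.UpperUnit D' := ⟨hD'u, hD'd⟩
  have hRB' : Stmt13Aux.Rook B' := ⟨hB'.1, hB'.2⟩
  have hA : C'⁻¹ * B' * D'⁻¹ = A := by
    rw [← hEq]
    have h1 : C'⁻¹ * (C' * A * D') = A * D' := by
      rw [show C' * A * D' = C' * (A * D') from Matrix.mul_assoc C' A D',
        ← Matrix.mul_assoc, hC'.inv_mul, Matrix.one_mul]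
    rw [h1, Matrix.mul_assoc, hD'.mul_inv, Matrix.mul_one]
  have hkey : (C * C'⁻¹) * B' * (D'⁻¹ * D) = C * A * D := by
    rw [← hA]
    simp only [Matrix.mul_assoc]
  exact Stmt13Aux.rook_unique hRB' ⟨hR.1, hR.2⟩ (hC.mul hC'.inv) (hD'.inv.mul hD) hkey
end
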